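/- For all real numbers λ̄ > 0, β ∈ [0,1], and κ ∈ (0,1] with βκ ≤ 1: sup over ζ > 0 of (ζ² + 1 + 2ζ)/(ζ² + 1 − β² + 2βκζ) equals (2 − β² − 2βκ)/(1 − β²(1+κ²)) if 1 − β² − βκ > 0, and equals 1/(1−β²) otherwise. -/

import Mathlib

/-!
Write `f(ζ) = (ζ + 1)² / (ζ² + 1 − β² + 2βκζ)`. Clearing denominators, `f ≤ c` becomes a
quadratic inequality in `ζ`. For `M = (2 − β² − 2βκ)/(1 − β²(1+κ²))` the difference is exactly
the square `((1 − βκ)ζ − (1 − β² − βκ))²`, so `M` is attained at the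
critical point `ζ = (1 − β² − βκ)/(1 − βκ)` when that point is positive. Otherwise
`f ≤ 1/(1 − β²) = f(0)` on `ζ > 0`, and the supremum is the limit at `0⁺`; for `β = 1` that
limit is `+∞`, the set is unbounded, and both sides are `0` by the conventions of `sSup` and `/`.
-/

open Filter Set Topology

namespace QuadraticRatio

noncomputable def ratio (β κ ζ : ℝ) : ℝ :=
  (ζ ^ 2 + 1 + 2 * ζ) / (ζ ^ 2 + 1 - β ^ 2 + 2 * β * κ * ζ)

variable {β κ ζ : ℝ}

lemma ratio_denom_pos (hβ : β ^ 2 < 1) (hβκ : 0 ≤ β * κ) (hζ : 0 ≤ ζ) :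
    0 < ζ ^ 2 + 1 - β ^ 2 + 2 * β * κ * ζ := by
  nlinarith [mul_nonneg hβκ hζ, sq_nonneg ζ]

lemma one_sub_mul_pos_of_interior (hc : 0 < 1 - β ^ 2 - β * κ) : 0 < 1 - β * κ := by
  nlinarith [sq_nonneg β]

lemma optimum_denom_pos (hc : 0 < 1 - β ^ 2 - β * κ) (hβκ : 0 ≤ β * κ) :
    0 < 1 - β ^ 2 * (1 + κ ^ 2) := by
  nlinarith [mul_nonneg hβκ (one_sub_mul_pos_of_interior hc).le]

lemma ratio_le_optimum (hc : 0 < 1 - β ^ 2 - β * κ) (hβκ : 0 ≤ β * κ) (hζ : 0 ≤ ζ) :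
    ratio β κ ζ ≤ (2 - β ^ 2 - 2 * β * κ) / (1 - β ^ 2 * (1 + κ ^ 2)) := by
  have hβ : β ^ 2 < 1 := by linarith
  rw [ratio, div_le_div_iff₀ (ratio_denom_pos hβ hβκ hζ) (optimum_denom_pos hc hβκ)]
  nlinarith [sq_nonneg ((1 - β * κ) * ζ - (1 - β ^ 2 - β * κ))]

lemma ratio_critical_point (hc : 0 < 1 - β ^ 2 - β * κ) (hβκ : 0 ≤ β * κ) :
    ratio β κ ((1 - β ^ 2 - β * κ) / (1 - β * κ)) =
      (2 - β ^ 2 - 2 * β * κ) / (1 - β ^ 2 * (1 + κ ^ 2)) := by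
  have hq := one_sub_mul_pos_of_interior hc
  have hd := ratio_denom_pos (by linarith) hβκ (div_pos hc hq).le
  rw [ratio, div_eq_div_iff hd.ne' (optimum_denom_pos hc hβκ).ne']
  field_simp
  ring

lemma isGreatest_ratio_image (hc : 0 < 1 - β ^ 2 - β * κ) (hβκ : 0 ≤ β * κ) :
    IsGreatest (ratio β κ '' Ioi 0) ((2 - β ^ 2 - 2 * β * κ) / (1 - β ^ 2 * (1 + κ ^ 2))) :=
  ⟨⟨_, div_pos hc (one_sub_mul_pos_of_interior hc), ratio_critical_point hc hβκ⟩,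
    by rintro _ ⟨ζ, hζ, rfl⟩; exact ratio_le_optimum hc hβκ (le_of_lt hζ)⟩

lemma ratio_le_ratio_zero (hc : 1 - β ^ 2 - β * κ ≤ 0) (hβ : β ^ 2 < 1) (hβκ : 0 ≤ β * κ)
    (hζ : 0 ≤ ζ) : ratio β κ ζ ≤ 1 / (1 - β ^ 2) := by
  rw [ratio, div_le_div_iff₀ (ratio_denom_pos hβ hβκ hζ) (by linarith)]
  nlinarith [mul_nonneg (sq_nonneg β) (sq_nonneg ζ), mul_nonneg hζ (neg_nonneg.2 hc)]

lemma continuousAt_ratio_zero (hβ : β ^ 2 ≠ 1) : ContinuousAt (ratio β κ) 0 :=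
  ContinuousAt.div (by fun_prop) (by fun_prop) (by simpa [sub_eq_zero] using hβ.symm)

lemma isLUB_ratio_image (hc : 1 - β ^ 2 - β * κ ≤ 0) (hβ : β ^ 2 < 1) (hβκ : 0 ≤ β * κ) :
    IsLUB (ratio β κ '' Ioi 0) (1 / (1 - β ^ 2)) := by
  refine isLUB_of_mem_closure ?_ ?_
  · rintro _ ⟨ζ, hζ, rfl⟩
    exact ratio_le_ratio_zero hc hβ hβκ (le_of_lt hζ)
  · have hlim : Tendsto (ratio β κ) (𝓝[>] 0) (𝓝 (1 / (1 - β ^ 2))) := by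
      simpa [ratio] using ((continuousAt_ratio_zero (κ := κ) hβ.ne).tendsto).mono_left
        nhdsWithin_le_nhds
    exact mem_closure_of_tendsto hlim (eventually_mem_nhdsWithin.mono fun ζ hζ => ⟨ζ, hζ, rfl⟩)

lemma tendsto_ratio_one_atTop (hκ : 0 ≤ κ) : Tendsto (ratio 1 κ) (𝓝[>] 0) atTop := by
  have hnum : Tendsto (fun ζ : ℝ => ζ ^ 2 + 1 + 2 * ζ) (𝓝[>] 0) (𝓝 1) := by
    simpa using ((by fun_prop : Continuous fun ζ : ℝ => ζ ^ 2 + 1 + 2 * ζ).tendsto 0).mono_left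
      nhdsWithin_le_nhds
  have hden : Tendsto (fun ζ : ℝ => ζ ^ 2 + 1 - 1 ^ 2 + 2 * 1 * κ * ζ) (𝓝[>] 0) (𝓝[>] 0) := by
    refine tendsto_nhdsWithin_iff.2 ⟨?_, eventually_mem_nhdsWithin.mono fun ζ (hζ : 0 < ζ) => ?_⟩
    · simpa using ((by fun_prop : Continuous fun ζ : ℝ =>
        ζ ^ 2 + 1 - 1 ^ 2 + 2 * 1 * κ * ζ).tendsto 0).mono_left nhdsWithin_le_nhds
    · exact mem_Ioi.2 (by nlinarith [mul_nonneg hκ hζ.le])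
  refine (hnum.pos_mul_atTop one_pos hden.inv_tendsto_nhdsGT_zero).congr fun ζ => ?_
  simp [ratio, div_eq_mul_inv]

lemma not_bddAbove_ratio_one_image (hκ : 0 ≤ κ) : ¬BddAbove (ratio 1 κ '' Ioi 0) := by
  rintro ⟨M, hM⟩
  obtain ⟨ζ, hζM, hζ⟩ :=
    ((tendsto_ratio_one_atTop hκ).eventually_gt_atTop M).and self_mem_nhdsWithin |>.exists
  exact (hM ⟨ζ, hζ, rfl⟩).not_gt hζM

end QuadraticRatio

open QuadraticRatio in
theorem stmt14 (β κ : ℝ) (hβ : β ∈ Set.Icc (0 : ℝ) 1)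
    (hκ : κ ∈ Set.Ioc (0 : ℝ) 1) :
    sSup {r : ℝ | ∃ ζ : ℝ, 0 < ζ ∧
        r = (ζ ^ 2 + 1 + 2 * ζ) / (ζ ^ 2 + 1 - β ^ 2 + 2 * β * κ * ζ)} =
      if 0 < 1 - β ^ 2 - β * κ then (2 - β ^ 2 - 2 * β * κ) / (1 - β ^ 2 * (1 + κ ^ 2))
      else 1 / (1 - β ^ 2) := by
  have hS : {r : ℝ | ∃ ζ : ℝ, 0 < ζ ∧
      r = (ζ ^ 2 + 1 + 2 * ζ) / (ζ ^ 2 + 1 - β ^ 2 + 2 * β * κ * ζ)} = ratio β κ '' Ioi 0 := by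
    ext r
    simp [ratio, eq_comm]
  have hβκ : 0 ≤ β * κ := mul_nonneg hβ.1 hκ.1.le
  rw [hS]
  split_ifs with hc
  · exact (isGreatest_ratio_image hc hβκ).csSup_eq
  · push Not at hc
    rcases hβ.2.lt_or_eq with hβ1 | rfl
    · have hβ2 : β ^ 2 < 1 := by nlinarith [hβ.1]
      exact (isLUB_ratio_image hc hβ2 hβκ).csSup_eq (nonempty_Ioi.image _)
    · rw [Real.sSup_of_not_bddAbove (not_bddAbove_ratio_one_image hκ.1.le)]
      norm_num
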